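/- Let n ≥ 1 and let Λ be the exterior algebra over ℚ on generators α₁, β₁, …, α_{2n}, β_{2n}, with P_i := α_i ∧ β_i and D_{rs} := α_r ∧ β_s − β_r ∧ α_s. Then every product P_{i₁} ∧ ⋯ ∧ P_{i_p} ∧ D_{j₁k₁} ∧ ⋯ ∧ D_{j_qk_q} with p + q = n and i₁, …, i_p, j₁, …, j_q, k₁, …, k_q pairwise distinct elements of {1, …, 2n} lies in the ℚ-linear span of the Gelfand–Zetlin monomials, i.e., the products P_{i'_1} ∧ ⋯ ∧ P_{i'_{p'}} ∧ D_{j'_1k'_1} ∧ ⋯ ∧ D_{j'_{q'}k'_{q'}} with p' + q' = n, pairwise distinct indices, and j'_1 < ⋯ < j'_{q'}, k'_1 < ⋯ < k'_{q'}, j'_r < k'_r for all r. -/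

import Mathlib

/-- The generator `α_i` (for `i` in `{1, …, 2n}`) of the exterior algebra over `ℚ` on the
free module with basis `α₁, β₁, …, α_{2n}, β_{2n}`: the image under `ι` of the `i`-th
standard basis vector of `Fin (4n) → ℚ`. -/
noncomputable def egAlpha (n : ℕ) (i : Fin (2 * n)) :
    ExteriorAlgebra ℚ (Fin (4 * n) → ℚ) :=
  ExteriorAlgebra.ι ℚ (Pi.single (Fin.castLE (by omega) i) 1)

/-- The generator `β_i`: the image under `ι` of the `(2n + i)`-th standard basis vector. -/
noncomputable def egBeta (n : ℕ) (i : Fin (2 * n)) :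
    ExteriorAlgebra ℚ (Fin (4 * n) → ℚ) :=
  ExteriorAlgebra.ι ℚ (Pi.single (⟨2 * n + i.val, by have := i.isLt; omega⟩ : Fin (4 * n)) 1)

/-- The class `P_i := α_i ∧ β_i` of the divisor `P_i = {x_i = 0}` on `E^{2n}`. -/
noncomputable def egP (n : ℕ) (i : Fin (2 * n)) : ExteriorAlgebra ℚ (Fin (4 * n) → ℚ) :=
  egAlpha n i * egBeta n i

/-- The class `D_{ij} := α_i ∧ β_j − β_i ∧ α_j` of the divisor `D_{ij} = P_i + P_j − Δ_{ij}`. -/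
noncomputable def egD (n : ℕ) (i j : Fin (2 * n)) : ExteriorAlgebra ℚ (Fin (4 * n) → ℚ) :=
  egAlpha n i * egBeta n j - egBeta n i * egAlpha n j


/-- Index data for a Gelfand–Zetlin monomial
`P_{i₁} ∧ ⋯ ∧ P_{i_p} ∧ D_{j₁k₁} ∧ ⋯ ∧ D_{j_qk_q}` with `p + q = n`: the indices
`i₁ < ⋯ < i_p, j₁, …, j_q, k₁, …, k_q` are pairwise distinct elements of `{1, …, 2n}` and
satisfy the Gelfand–Zetlin condition `j₁ < ⋯ < j_q`, `k₁ < ⋯ < k_q`, `j_r < k_r`. -/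
structure GZIndex (n : ℕ) where
  p : ℕ
  q : ℕ
  hpq : p + q = n
  i : Fin p → Fin (2 * n)
  j : Fin q → Fin (2 * n)
  k : Fin q → Fin (2 * n)
  imono : StrictMono i
  jmono : StrictMono j
  kmono : StrictMono k
  hjk : ∀ r, j r < k r
  hdistinct : Function.Injective (Sum.elim i (Sum.elim j k))

/-- The Gelfand–Zetlin monomial `P_{i₁} ∧ ⋯ ∧ P_{i_p} ∧ D_{j₁k₁} ∧ ⋯ ∧ D_{j_qk_q}`
attached to the index data `idx`. -/
noncomputable def gzMonomial (n : ℕ) (idx : GZIndex n) :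
    ExteriorAlgebra ℚ (Fin (4 * n) → ℚ) :=
  (List.ofFn fun r : Fin idx.p => egP n (idx.i r)).prod *
    (List.ofFn fun r : Fin idx.q => egD n (idx.j r) (idx.k r)).prod

/-!
All 2-forms `α_a ∧ β_b` commute with each other, so the factors `P_i`, `D_jk` may be reordered
freely, and `D_jk = D_kj` lets us assume `j < k`. Writing `D_ab = ω_ab + ω_ba` with
`ω_ab = α_a ∧ β_b`, the exchange rule `ω_ab ω_cd = -ω_ad ω_cb` yields the Plücker relation
`D_ad D_bc = -D_ac D_bd - D_ab D_cd`. For a nested pair `a < b < c < d` it rewrites `D_ad D_bc`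
through pairs with the same indices but strictly smaller energy `∑ (k - j)²`. Once no two pairs
are nested, listing them by increasing `j` makes the `k` increase too: the monomial is
Gelfand–Zetlin.
-/

theorem List.exists_perm_pairwise_le_comp {α β : Type*} [LinearOrder β] (f : α → β)
    (l : List α) : ∃ l' : List α, l'.Perm l ∧ l'.Pairwise fun x y => f x ≤ f y :=
  ⟨l.mergeSort fun x y => f x ≤ f y, List.mergeSort_perm _ _, by
    simpa using List.pairwise_mergeSort (le := fun x y => f x ≤ f y)
      (fun _ _ _ h₁ h₂ => by
        simpa using (by simpa using h₁ : f _ ≤ f _).trans (by simpa using h₂))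
      (fun a b => by simpa using le_total (f a) (f b)) l⟩

theorem plucker_of_exchange {A I : Type*} [Ring A] (ω : I → I → A)
    (hcomm : ∀ a b c d, Commute (ω a b) (ω c d))
    (hexch : ∀ a b c d, ω a b * ω c d = -(ω a d * ω c b)) (a b c d : I) :
    (ω a d + ω d a) * (ω b c + ω c b) =
      -((ω a c + ω c a) * (ω b d + ω d b)) - (ω a b + ω b a) * (ω c d + ω d c) := by
  simp only [mul_add, add_mul]
  rw [hexch a d b c, hexch a d c b, hexch d a b c, hexch d a c b, hexch a c d b, hexch c a b d,
    (hcomm d c b a).eq, (hcomm d b c a).eq, (hcomm c d b a).eq]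
  abel

namespace ExteriorAlgebra

variable {R M : Type*} [CommRing R] [AddCommGroup M] [Module R M]

theorem ι_mul_ι_comm (u v : M) : ι R u * ι R v = -(ι R v * ι R u) :=
  eq_neg_of_add_eq_zero_left (ι_add_mul_swap u v)

theorem commute_ι_mul_ι_ι (u v w : M) : Commute (ι R u * ι R v) (ι R w) := by
  rw [Commute, SemiconjBy, mul_assoc, ι_mul_ι_comm v w, mul_neg, ← mul_assoc,
    ι_mul_ι_comm u w, neg_mul, neg_neg, mul_assoc]

theorem commute_ι_mul_ι (u v w x : M) : Commute (ι R u * ι R v) (ι R w * ι R x) :=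
  (commute_ι_mul_ι_ι u v w).mul_right (commute_ι_mul_ι_ι u v x)

theorem ι_mul_ι_mul_ι_mul_ι_exchange (u v w x : M) :
    ι R u * ι R v * (ι R w * ι R x) = -(ι R u * ι R x * (ι R w * ι R v)) := by
  rw [mul_assoc, ← (commute_ι_mul_ι_ι w x v).eq, ι_mul_ι_comm w x]
  simp only [neg_mul, mul_neg, mul_assoc]

end ExteriorAlgebra

open ExteriorAlgebra

section

variable {n : ℕ}

theorem egBeta_mul_egAlpha (a b : Fin (2 * n)) :
    egBeta n a * egAlpha n b = -(egAlpha n b * egBeta n a) :=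
  ι_mul_ι_comm _ _

theorem egD_eq_add (a b : Fin (2 * n)) :
    egD n a b = egAlpha n a * egBeta n b + egAlpha n b * egBeta n a := by
  rw [egD, egBeta_mul_egAlpha, sub_neg_eq_add]

theorem egD_comm (a b : Fin (2 * n)) : egD n a b = egD n b a := by
  rw [egD_eq_add, egD_eq_add, add_comm]

theorem egD_plucker (a b c d : Fin (2 * n)) :
    egD n a d * egD n b c = -(egD n a c * egD n b d) - egD n a b * egD n c d := by
  simp only [egD_eq_add]
  exact plucker_of_exchange (fun a b => egAlpha n a * egBeta n b)
    (fun _ _ _ _ => commute_ι_mul_ι _ _ _ _)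
    (fun _ _ _ _ => ι_mul_ι_mul_ι_mul_ι_exchange _ _ _ _) a b c d

theorem commute_egP_egP (a b : Fin (2 * n)) : Commute (egP n a) (egP n b) :=
  commute_ι_mul_ι _ _ _ _

theorem commute_egD_egD (a b c d : Fin (2 * n)) : Commute (egD n a b) (egD n c d) :=
  ((commute_ι_mul_ι _ _ _ _).sub_right (commute_ι_mul_ι _ _ _ _)).sub_left
    ((commute_ι_mul_ι _ _ _ _).sub_right (commute_ι_mul_ι _ _ _ _))

end

namespace GelfandZetlin

section Pairs

variable {α : Type*}

def endpoints (ps : List (α × α)) : Multiset α :=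
  ↑(ps.map Prod.fst) + ↑(ps.map Prod.snd)

@[simp]
theorem endpoints_cons (x : α × α) (ps : List (α × α)) :
    endpoints (x :: ps) = x.1 ::ₘ x.2 ::ₘ endpoints ps := by
  simp [endpoints]

theorem _root_.List.Perm.endpoints_eq {ps qs : List (α × α)} (h : ps.Perm qs) :
    endpoints ps = endpoints qs := by
  simp only [endpoints, Multiset.coe_eq_coe.2 (h.map _)]

theorem endpoints_ofFn {q : ℕ} (j k : Fin q → α) :
    endpoints (List.ofFn fun r => (j r, k r)) = ↑(List.ofFn j) + ↑(List.ofFn k) := by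
  simp [endpoints, List.map_ofFn, Function.comp_def]

theorem injective_sumElim_iff_nodup {p q : ℕ} (i : Fin p → α) (j k : Fin q → α) :
    Function.Injective (Sum.elim i (Sum.elim j k)) ↔
      (↑(List.ofFn i) + endpoints (List.ofFn fun r => (j r, k r))).Nodup := by
  rw [endpoints_ofFn, Multiset.coe_add, Multiset.coe_add, Multiset.coe_nodup]
  simp only [Sum.elim_injective, Sum.forall, Sum.elim_inl, Sum.elim_inr, List.nodup_append,
    List.nodup_ofFn, List.mem_append, List.mem_ofFn, forall_exists_index, or_imp, forall_and,
    forall_apply_eq_imp_iff]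

theorem fst_ne_snd_of_nodup_endpoints {ps : List (α × α)} (h : (endpoints ps).Nodup)
    {x : α × α} (hx : x ∈ ps) : x.1 ≠ x.2 := fun heq =>
  Multiset.disjoint_left.1 (Multiset.nodup_add.1 h).2.2
    (Multiset.mem_coe.2 (List.mem_map_of_mem hx))
    (heq ▸ Multiset.mem_coe.2 (List.mem_map_of_mem hx))

theorem pairwise_ne_of_nodup_endpoints {ps : List (α × α)} (h : (endpoints ps).Nodup) :
    ps.Pairwise fun x y => x.1 ≠ y.1 ∧ x.2 ≠ y.2 := by
  obtain ⟨hfst, hsnd, -⟩ := Multiset.nodup_add.1 h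
  rw [Multiset.coe_nodup, List.Nodup, List.pairwise_map] at hfst hsnd
  exact hfst.and hsnd

def sortPair [LinearOrder α] (x : α × α) : α × α := (min x.1 x.2, max x.1 x.2)

theorem endpoints_map_sortPair [LinearOrder α] (ps : List (α × α)) :
    endpoints (ps.map sortPair) = endpoints ps := by
  induction ps with
  | nil => rfl
  | cons x ps ih =>
    rcases le_total x.1 x.2 with h | h <;> simp [sortPair, h, ih, Multiset.cons_swap]

def Nested [LT α] (x y : α × α) : Prop := x.1 < y.1 ∧ y.2 < x.2

theorem exists_perm_cons_cons_nested [LT α] {ps : List (α × α)}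
    (h : ¬ps.Pairwise fun x y => ¬Nested x y ∧ ¬Nested y x) :
    ∃ x y rest, ps.Perm (x :: y :: rest) ∧ Nested x y := by
  simp only [List.pairwise_iff_forall_sublist, not_forall, not_and_or, not_not] at h
  obtain ⟨x, y, hsub, hxy⟩ := h
  obtain ⟨rest, hperm⟩ := hsub.exists_perm_append
  rcases hxy with hxy | hyx
  · exact ⟨x, y, rest, hperm, hxy⟩
  · exact ⟨y, x, rest, hperm.trans (List.Perm.swap y x rest), hyx⟩

theorem exists_perm_pairwise_lt_of_unnested [LinearOrder α] {ps : List (α × α)}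
    (hun : ps.Pairwise fun x y => ¬Nested x y ∧ ¬Nested y x)
    (hne : ps.Pairwise fun x y => x.1 ≠ y.1 ∧ x.2 ≠ y.2) :
    ∃ qs : List (α × α), qs.Perm ps ∧ qs.Pairwise fun x y => x.1 < y.1 ∧ x.2 < y.2 := by
  obtain ⟨qs, hperm, hsort⟩ := List.exists_perm_pairwise_le_comp Prod.fst ps
  have hun' := (hperm.pairwise_iff fun h => h.symm).2 hun
  have hne' := (hperm.pairwise_iff fun h => ⟨h.1.symm, h.2.symm⟩).2 hne
  refine ⟨qs, hperm, ((hsort.and hun').and hne').imp ?_⟩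
  rintro x y ⟨⟨hle, hnested, -⟩, hne₁, hne₂⟩
  have hfst : x.1 < y.1 := lt_of_le_of_ne hle hne₁
  exact ⟨hfst, lt_of_le_of_ne (not_lt.1 fun hsnd => hnested ⟨hfst, hsnd⟩) hne₂⟩

end Pairs

section Energy

variable {m : ℕ}

def energy (ps : List (Fin m × Fin m)) : ℕ := (ps.map fun x => (x.2.val - x.1.val) ^ 2).sum

@[simp]
theorem energy_cons (x : Fin m × Fin m) (ps : List (Fin m × Fin m)) :
    energy (x :: ps) = (x.2.val - x.1.val) ^ 2 + energy ps := by
  simp [energy]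

theorem _root_.List.Perm.energy_eq {ps qs : List (Fin m × Fin m)} (h : ps.Perm qs) :
    energy ps = energy qs :=
  (h.map _).sum_eq

theorem energy_uncross_lt {a b c d : Fin m} (hab : a < b) (hbc : b < c) (hcd : c < d)
    (rest : List (Fin m × Fin m)) :
    energy ((a, c) :: (b, d) :: rest) < energy ((a, d) :: (b, c) :: rest) ∧
      energy ((a, b) :: (c, d) :: rest) < energy ((a, d) :: (b, c) :: rest) := by
  rw [Fin.lt_def] at hab hbc hcd
  simp only [energy_cons]
  zify [hab.le, hbc.le, hcd.le, hab.le.trans hbc.le, (hab.trans hbc).le.trans hcd.le,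
    hbc.le.trans hcd.le]
  have hgap : (0 : ℤ) < ((b : ℕ) - (a : ℕ) : ℤ) * ((d : ℕ) - (c : ℕ) : ℤ) :=
    mul_pos (by omega) (by omega)
  constructor <;> nlinarith

end Energy

section Monomials

variable {n : ℕ}

noncomputable def egPProd (n : ℕ) (is : List (Fin (2 * n))) :
    ExteriorAlgebra ℚ (Fin (4 * n) → ℚ) :=
  (is.map (egP n)).prod

noncomputable def egDProd (n : ℕ) (ps : List (Fin (2 * n) × Fin (2 * n))) :
    ExteriorAlgebra ℚ (Fin (4 * n) → ℚ) :=
  (ps.map fun x => egD n x.1 x.2).prod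

theorem _root_.List.Perm.egPProd_eq {is is' : List (Fin (2 * n))} (h : is.Perm is') :
    egPProd n is = egPProd n is' :=
  (h.map _).prod_eq' (List.pairwise_map.2 (List.pairwise_of_forall commute_egP_egP))

theorem _root_.List.Perm.egDProd_eq {ps ps' : List (Fin (2 * n) × Fin (2 * n))}
    (h : ps.Perm ps') : egDProd n ps = egDProd n ps' :=
  (h.map _).prod_eq'
    (List.pairwise_map.2 (List.pairwise_of_forall fun _ _ => commute_egD_egD _ _ _ _))

theorem egDProd_map_sortPair (ps : List (Fin (2 * n) × Fin (2 * n))) :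
    egDProd n (ps.map sortPair) = egDProd n ps := by
  simp only [egDProd, List.map_map]
  congr 2
  funext x
  rcases le_total x.1 x.2 with h | h <;> simp [sortPair, h, egD_comm x.1]

theorem egDProd_cons_cons_nested (a b c d : Fin (2 * n))
    (rest : List (Fin (2 * n) × Fin (2 * n))) :
    egDProd n ((a, d) :: (b, c) :: rest) =
      -egDProd n ((a, c) :: (b, d) :: rest) - egDProd n ((a, b) :: (c, d) :: rest) := by
  simp only [egDProd, List.map_cons, List.prod_cons, ← mul_assoc, egD_plucker a b c d, sub_mul,
    neg_mul]

theorem egPProd_mul_egDProd_mem_range {is : List (Fin (2 * n))}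
    {ps : List (Fin (2 * n) × Fin (2 * n))} (hlen : is.length + ps.length = n)
    (his : is.Pairwise (· < ·)) (hps : ps.Pairwise fun x y => x.1 < y.1 ∧ x.2 < y.2)
    (hlt : ∀ x ∈ ps, x.1 < x.2) (hnodup : (↑is + endpoints ps).Nodup) :
    egPProd n is * egDProd n ps ∈ Set.range (gzMonomial n) := by
  refine ⟨
    { p := is.length
      q := ps.length
      hpq := hlen
      i := is.get
      j := fun r => (ps.get r).1
      k := fun r => (ps.get r).2
      imono := his.sortedLT.strictMono_get
      jmono := fun r s h => (List.pairwise_iff_get.1 hps r s h).1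
      kmono := fun r s h => (List.pairwise_iff_get.1 hps r s h).2
      hjk := fun r => hlt _ (List.get_mem _ _)
      hdistinct := (injective_sumElim_iff_nodup _ _ _).2 (by simpa using hnodup) }, ?_⟩
  simp [gzMonomial, egPProd, egDProd, ← List.ofFn_getElem_eq_map]

theorem egPProd_mul_egDProd_mem_range_of_unnested {is : List (Fin (2 * n))}
    {ps : List (Fin (2 * n) × Fin (2 * n))} (hlen : is.length + ps.length = n)
    (hlt : ∀ x ∈ ps, x.1 < x.2) (hnodup : (↑is + endpoints ps).Nodup)
    (hun : ps.Pairwise fun x y => ¬Nested x y ∧ ¬Nested y x) :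
    egPProd n is * egDProd n ps ∈ Set.range (gzMonomial n) := by
  obtain ⟨his, hends, -⟩ := Multiset.nodup_add.1 hnodup
  obtain ⟨is', his', hsorted⟩ := List.exists_perm_pairwise_le_comp id is
  obtain ⟨ps', hps', hgz⟩ :=
    exists_perm_pairwise_lt_of_unnested hun (pairwise_ne_of_nodup_endpoints hends)
  rw [his'.symm.egPProd_eq, hps'.symm.egDProd_eq]
  refine egPProd_mul_egDProd_mem_range (by rwa [his'.length_eq, hps'.length_eq]) ?_ hgz
    (fun x hx => hlt x (hps'.mem_iff.1 hx))
    (by rwa [Multiset.coe_eq_coe.2 his', hps'.endpoints_eq])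
  exact (hsorted.and (his'.nodup_iff.2 (Multiset.coe_nodup.1 his))).imp fun h =>
    lt_of_le_of_ne h.1 h.2

theorem egPProd_mul_egDProd_mem_span_of_forall_lt (is : List (Fin (2 * n)))
    (ps : List (Fin (2 * n) × Fin (2 * n))) (hlen : is.length + ps.length = n)
    (hlt : ∀ x ∈ ps, x.1 < x.2) (hnodup : (↑is + endpoints ps).Nodup) :
    egPProd n is * egDProd n ps ∈ Submodule.span ℚ (Set.range (gzMonomial n)) := by
  induction hE : energy ps using Nat.strong_induction_on generalizing ps with
  | _ N ih =>
  by_cases hun : ps.Pairwise fun x y => ¬Nested x y ∧ ¬Nested y x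
  · exact Submodule.subset_span (egPProd_mul_egDProd_mem_range_of_unnested hlen hlt hnodup hun)
  obtain ⟨⟨a, d⟩, ⟨b, c⟩, rest, hperm, hab, hcd⟩ := exists_perm_cons_cons_nested hun
  dsimp only at hab hcd
  have hbc : b < c := hlt (b, c) (hperm.mem_iff.2 (by simp))
  have hrest : ∀ x ∈ rest, x.1 < x.2 := fun x hx => hlt x (hperm.mem_iff.2 (by simp [hx]))
  have hstep : ∀ qs, endpoints qs = endpoints ps → qs.length = ps.length →
      (∀ x ∈ qs, x.1 < x.2) → energy qs < N →
      egPProd n is * egDProd n qs ∈ Submodule.span ℚ (Set.range (gzMonomial n)) :=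
    fun qs hends hqlen hqlt hqE => ih _ hqE qs (by rwa [hqlen]) hqlt (by rwa [hends]) rfl
  obtain ⟨hE₁, hE₂⟩ := energy_uncross_lt hab hbc hcd rest
  rw [← hperm.energy_eq, hE] at hE₁ hE₂
  rw [hperm.egDProd_eq, egDProd_cons_cons_nested, mul_sub, mul_neg]
  refine Submodule.sub_mem _ (Submodule.neg_mem _ (hstep _ ?_ ?_ ?_ hE₁)) (hstep _ ?_ ?_ ?_ hE₂)
  · simp [hperm.endpoints_eq, Multiset.cons_swap]
  · simp [hperm.length_eq]
  · simpa [hab.trans hbc, hbc.trans hcd] using hrest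
  · simp [hperm.endpoints_eq, Multiset.cons_swap]
  · simp [hperm.length_eq]
  · simpa [hab, hcd] using hrest

theorem egPProd_mul_egDProd_mem_span (is : List (Fin (2 * n)))
    (ps : List (Fin (2 * n) × Fin (2 * n))) (hlen : is.length + ps.length = n)
    (hnodup : (↑is + endpoints ps).Nodup) :
    egPProd n is * egDProd n ps ∈ Submodule.span ℚ (Set.range (gzMonomial n)) := by
  rw [← egDProd_map_sortPair]
  refine egPProd_mul_egDProd_mem_span_of_forall_lt is _ (by simpa using hlen) ?_
    (by rwa [endpoints_map_sortPair])
  simp only [List.mem_map, forall_exists_index, and_imp, forall_apply_eq_imp_iff₂, sortPair]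
  exact fun x hx =>
    min_lt_max.2 (fst_ne_snd_of_nodup_endpoints (Multiset.nodup_add.1 hnodup).2.1 hx)

end Monomials

end GelfandZetlin

theorem monomial_mem_span_gzMonomial_general (n : ℕ) (p q : ℕ) (hpq : p + q = n)
    (i : Fin p → Fin (2 * n)) (j k : Fin q → Fin (2 * n))
    (hdistinct : Function.Injective (Sum.elim i (Sum.elim j k))) :
    (List.ofFn fun r : Fin p => egP n (i r)).prod *
        (List.ofFn fun r : Fin q => egD n (j r) (k r)).prod ∈
      Submodule.span ℚ (Set.range (gzMonomial n)) := by
  have hP : (List.ofFn fun r => egP n (i r)).prod = GelfandZetlin.egPProd n (List.ofFn i) := by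
    simp [GelfandZetlin.egPProd, List.map_ofFn, Function.comp_def]
  have hD : (List.ofFn fun r => egD n (j r) (k r)).prod =
      GelfandZetlin.egDProd n (List.ofFn fun r => (j r, k r)) := by
    simp [GelfandZetlin.egDProd, List.map_ofFn, Function.comp_def]
  rw [hP, hD]
  exact GelfandZetlin.egPProd_mul_egDProd_mem_span _ _ (by simpa using hpq)
    ((GelfandZetlin.injective_sumElim_iff_nodup i j k).1 hdistinct)

/-- Every product `P_{i₁} ∧ ⋯ ∧ P_{i_p} ∧ D_{j₁k₁} ∧ ⋯ ∧ D_{j_qk_q}` with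
`p + q = n` and pairwise distinct indices lies in the `ℚ`-linear span of the Gelfand–Zetlin
monomials (the cohomological realization of `LZⁿ(E^{2n}, 0) = S + T`, Lemma 3.4). -/
theorem monomial_mem_span_gzMonomial (n : ℕ) (hn : 0 < n) (p q : ℕ) (hpq : p + q = n)
    (i : Fin p → Fin (2 * n)) (j k : Fin q → Fin (2 * n))
    (hdistinct : Function.Injective (Sum.elim i (Sum.elim j k))) :
    (List.ofFn fun r : Fin p => egP n (i r)).prod *
        (List.ofFn fun r : Fin q => egD n (j r) (k r)).prod ∈
      Submodule.span ℚ (Set.range (gzMonomial n)) :=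
  monomial_mem_span_gzMonomial_general n p q hpq i j k hdistinct
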